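/- arXiv:1503.07383 — 8 statements merged into one kernel-verified Lean document; each statement's English description precedes it below -/
import Mathlib

section
/- Let n = 2m + μ with μ ∈ {0,1} and m̂ = m + μ. Let 0 ≤ σ₁ ≤ σ₂ ≤ ⋯ ≤ σ_n be real numbers and set x_j = σ_{2j−1} for j = 1,…,m̂ and y_j = σ_{2j} for j = 1,…,m. Then ∑_{ε ∈ {−1,+1}^n} | ∏_{1≤j<k≤n} (ε_k σ_k − ε_j σ_j) | = 2^n · ∏_{1≤j<k≤m̂} (x_k² − x_j²) · ∏_{k=1}^{m} y_k · ∏_{1≤j<k≤m} (y_k² − y_j²). (Empty products equal 1.) -/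
/-!
For `0 ≤ σ_j ≤ σ_k` one has `|ε_k σ_k - ε_j σ_j| = σ_k - ε_k ε_j σ_j`, so each summand loses its
absolute value and becomes `∏_k ε_k ^ k` times the Vandermonde determinant of `ε σ`, i.e. the
determinant of the matrix `(ε_i ^ (i + j) σ_i ^ j)`. Summing over the signs row by row
(multilinearity of the determinant) leaves the checkerboard matrix with entries `2 σ_i ^ j` where
`i + j` is even and `0` elsewhere. Sorting rows and columns by parity makes it block diagonal, with
blocks `2 (σ_{2k} ^ 2) ^ l` and `2 σ_{2k+1} (σ_{2k+1} ^ 2) ^ l`: Vandermonde matrices in the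
squares, the odd one with its rows scaled by `2 σ_{2k+1}`.
-/

open Finset Matrix

def boolSign (R : Type*) [Ring R] (b : Bool) : R := if b then 1 else -1

variable {R : Type*}

section Ring

variable [Ring R]

@[simp] lemma boolSign_true : boolSign R true = 1 := rfl

@[simp] lemma boolSign_false : boolSign R false = -1 := rfl

@[simp] lemma boolSign_mul_self (b : Bool) : boolSign R b * boolSign R b = 1 := by
  cases b <;> simp

lemma sum_boolSign_pow (n : ℕ) : ∑ b : Bool, boolSign R b ^ n = if Even n then 2 else 0 := by
  rw [Fintype.sum_bool, boolSign_true, boolSign_false, one_pow]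
  split_ifs with hn
  · rw [hn.neg_one_pow, one_add_one_eq_two]
  · rw [(Nat.not_even_iff_odd.mp hn).neg_one_pow, add_neg_cancel]

end Ring

section Order

variable [CommRing R] [LinearOrder R] [IsStrictOrderedRing R]

lemma abs_boolSign_mul_sub_boolSign_mul {a b : R} (ha : 0 ≤ a) (hab : a ≤ b) (p q : Bool) :
    |boolSign R p * b - boolSign R q * a| = b - boolSign R p * boolSign R q * a := by
  cases p <;> cases q <;> simp only [boolSign_true, boolSign_false]
  all_goals rw [abs_eq (by linarith)]
  all_goals first | (left; ring1) | (right; ring1)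

lemma abs_prod_Iio_boolSign_mul_sub {n : ℕ} {σ : Fin n → R} (hσ : Monotone σ)
    (h0 : ∀ i, 0 ≤ σ i) (ε : Fin n → Bool) :
    |∏ k, ∏ j ∈ Iio k, (boolSign R (ε k) * σ k - boolSign R (ε j) * σ j)| =
      ∏ k, ∏ j ∈ Iio k, (σ k - boolSign R (ε k) * boolSign R (ε j) * σ j) := by
  simp_rw [abs_prod]
  exact prod_congr rfl fun k _ => prod_congr rfl fun j hj =>
    abs_boolSign_mul_sub_boolSign_mul (h0 j) (hσ (mem_Iio.mp hj).le) _ _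

end Order

lemma Matrix.det_vandermonde_eq_prod_Iio [CommRing R] {n : ℕ} (v : Fin n → R) :
    (vandermonde v).det = ∏ k : Fin n, ∏ j ∈ Iio k, (v k - v j) := by
  rw [det_vandermonde]
  exact prod_comm' fun k j => by simp

lemma prod_Iio_sub_mul_mul_eq_det [CommRing R] {n : ℕ} (c σ : Fin n → R)
    (hc : ∀ k, c k * c k = 1) :
    ∏ k, ∏ j ∈ Iio k, (σ k - c k * c j * σ j) =
      (of fun i j : Fin n => c i ^ ((i : ℕ) + j) * σ i ^ (j : ℕ)).det := by
  have hrows : (of fun i j : Fin n => c i ^ ((i : ℕ) + j) * σ i ^ (j : ℕ)) =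
      of fun i j => c i ^ (i : ℕ) * vandermonde (fun i => c i * σ i) i j := by
    ext i j
    simp only [of_apply, vandermonde_apply, mul_pow, pow_add, mul_assoc]
  rw [hrows, det_mul_column, det_vandermonde_eq_prod_Iio, ← prod_mul_distrib]
  refine prod_congr rfl fun k _ => ?_
  rw [← Fin.card_Iio k, ← prod_const, ← prod_mul_distrib]
  refine prod_congr rfl fun j _ => ?_
  linear_combination -σ k * hc k

lemma Matrix.det_of_sum_rows [CommRing R] {n : Type*} [Fintype n] [DecidableEq n]
    {β : n → Type*} [∀ i, Fintype (β i)] (f : ∀ i, β i → n → R) :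
    (of fun i j => ∑ b, f i b j).det = ∑ ε : ∀ i, β i, (of fun i j => f i (ε i) j).det := by
  simp_rw [← Finset.sum_apply]
  exact (detRowAlternating : (n → R) [⋀^n]→ₗ[R] R).toMultilinearMap.map_sum f

def finEvenOddEquiv {m μ : ℕ} (hμ : μ ≤ 1) : Fin (m + μ) ⊕ Fin m ≃ Fin (2 * m + μ) where
  toFun := Sum.elim (fun k => ⟨2 * k, by omega⟩) (fun k => ⟨2 * k + 1, by omega⟩)
  invFun i := if h : (i : ℕ) % 2 = 0 then .inl ⟨i / 2, by omega⟩ else .inr ⟨i / 2, by omega⟩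
  left_inv := by
    rintro (k | k)
    · simp
    · simp [Fin.ext_iff]; omega
  right_inv i := by
    by_cases h : (i : ℕ) % 2 = 0 <;> simp [h, Fin.ext_iff] <;> omega

lemma Matrix.det_eq_det_even_mul_det_odd [CommRing R] {m μ : ℕ} (hμ : μ ≤ 1)
    (A : Matrix (Fin (2 * m + μ)) (Fin (2 * m + μ)) R)
    (hA : ∀ i j : Fin (2 * m + μ), Odd ((i : ℕ) + j) → A i j = 0) :
    A.det = (A.submatrix (finEvenOddEquiv hμ ∘ Sum.inl) (finEvenOddEquiv hμ ∘ Sum.inl)).det *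
      (A.submatrix (finEvenOddEquiv hμ ∘ Sum.inr) (finEvenOddEquiv hμ ∘ Sum.inr)).det := by
  have hlower : (A.submatrix (finEvenOddEquiv hμ) (finEvenOddEquiv hμ)).toBlocks₂₁ = 0 := by
    ext k l
    exact hA _ _ ⟨k + l, by simp [finEvenOddEquiv]; ring⟩
  rw [← det_submatrix_equiv_self (finEvenOddEquiv hμ) A,
    ← fromBlocks_toBlocks (A.submatrix (finEvenOddEquiv hμ) (finEvenOddEquiv hμ)), hlower,
    det_fromBlocks_zero₂₁]
  rfl

lemma det_of_ite_even_mul_pow [CommRing R] {m μ : ℕ} (hμ : μ ≤ 1) (σ : Fin (2 * m + μ) → R) :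
    (of fun i j : Fin (2 * m + μ) => (if Even ((i : ℕ) + j) then 2 else 0) * σ i ^ (j : ℕ)).det =
      2 ^ (m + μ) * (vandermonde fun k : Fin (m + μ) => σ ⟨2 * k, by omega⟩ ^ 2).det *
        ((∏ k : Fin m, 2 * σ ⟨2 * k + 1, by omega⟩) *
          (vandermonde fun k : Fin m => σ ⟨2 * k + 1, by omega⟩ ^ 2).det) := by
  rw [det_eq_det_even_mul_det_odd hμ]
  · congr 1
    · trans ((2 : R) • vandermonde fun k : Fin (m + μ) => σ ⟨2 * k, by omega⟩ ^ 2).det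
      · congr 1
        ext k l
        simp [finEvenOddEquiv, pow_mul, parity_simps]
      rw [det_smul, Fintype.card_fin]
    · rw [← det_mul_column]
      congr 1
      ext k l
      simp [finEvenOddEquiv, pow_mul, pow_succ, parity_simps]
      ring
  · intro i j hij
    rw [of_apply, if_neg (Nat.not_even_iff_odd.mpr hij), zero_mul]

/-- the sum over all sign vectors of the absolute Vandermonde of the
signed ordered values `σ₁ ≤ ⋯ ≤ σ_n` factorizes into the Vandermonde of the squares of
the odd-indexed values, the even-indexed values and the Vandermonde of their squares. -/
theorem signed_vandermonde_sum (n m μ : ℕ) (hμ : μ = 0 ∨ μ = 1) (hn : n = 2 * m + μ)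
    (σ : Fin n → ℝ) (hmono : Monotone σ) (hnonneg : ∀ i, 0 ≤ σ i) :
    (∑ ε : Fin n → Bool,
      |∏ k : Fin n, ∏ j ∈ Finset.Iio k,
        ((if ε k then (1 : ℝ) else -1) * σ k - (if ε j then (1 : ℝ) else -1) * σ j)|) =
    2 ^ n *
      (∏ k : Fin (m + μ), ∏ j ∈ Finset.Iio k,
        (σ ⟨2 * (k : ℕ), by have := k.isLt; omega⟩ ^ 2 -
         σ ⟨2 * (j : ℕ), by have := j.isLt; omega⟩ ^ 2)) *
      (∏ k : Fin m, σ ⟨2 * (k : ℕ) + 1, by have := k.isLt; omega⟩) *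
      (∏ k : Fin m, ∏ j ∈ Finset.Iio k,
        (σ ⟨2 * (k : ℕ) + 1, by have := k.isLt; omega⟩ ^ 2 -
         σ ⟨2 * (j : ℕ) + 1, by have := j.isLt; omega⟩ ^ 2)) := by
  subst hn
  have hμ' : μ ≤ 1 := by omega
  calc _ = ∑ ε : Fin (2 * m + μ) → Bool,
        (of fun i j : Fin (2 * m + μ) => boolSign ℝ (ε i) ^ ((i : ℕ) + j) * σ i ^ (j : ℕ)).det :=
        sum_congr rfl fun ε _ => (abs_prod_Iio_boolSign_mul_sub hmono hnonneg ε).trans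
          (prod_Iio_sub_mul_mul_eq_det _ σ fun k => boolSign_mul_self _)
    _ = (of fun i j : Fin (2 * m + μ) =>
          (if Even ((i : ℕ) + j) then 2 else 0) * σ i ^ (j : ℕ)).det := by
        simp_rw [← sum_boolSign_pow, sum_mul]
        exact (det_of_sum_rows fun (i : Fin (2 * m + μ)) (b : Bool) j =>
          boolSign ℝ b ^ ((i : ℕ) + j) * σ i ^ (j : ℕ)).symm
    _ = _ := by
        rw [det_of_ite_even_mul_pow hμ', det_vandermonde_eq_prod_Iio, det_vandermonde_eq_prod_Iio,
          prod_mul_distrib, prod_const, card_univ, Fintype.card_fin]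
        ring
end

section
/- Let I ⊆ ℝ be an interval, let f₁,…,f_n : I → ℝ be continuous, and let F₁,…,F_n : I → ℝ satisfy F_i′(x) = f_i(x) for all x ∈ I. Then for any points x₁,…,x_{n+1} ∈ I, the iterated integral ∫_{x₁}^{x₂} dξ₁ ∫_{x₂}^{x₃} dξ₂ ⋯ ∫_{x_n}^{x_{n+1}} dξ_n det( f_i(ξ_j) )_{i,j=1,…,n} equals (−1)^n times the determinant of the (n+1)×(n+1) matrix whose (i,j) entry is F_i(x_j) for 1 ≤ i ≤ n, 1 ≤ j ≤ n+1, and whose last row (i = n+1) consists entirely of ones. -/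
open MeasureTheory

/-- The iterated oriented integral
`∫_{a 0}^{b 0} dξ₀ ∫_{a 1}^{b 1} dξ₁ ⋯ ∫_{a (n-1)}^{b (n-1)} dξ_{n-1} f (ξ₀,…,ξ_{n-1})`. -/
noncomputable def nestedIntegral : (n : ℕ) → ((Fin n → ℝ) → ℝ) → (Fin n → ℝ) → (Fin n → ℝ) → ℝ
  | 0, f, _, _ => f ![]
  | n + 1, f, a, b =>
      ∫ ξ in (a 0)..(b 0),
        nestedIntegral n (fun y => f (Fin.cons ξ y)) (fun i => a i.succ) (fun i => b i.succ)

open Set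
lemma nestedIntegral_sum_prod {α : Type*} : ∀ (n : ℕ) (s : Finset α) (c : α → ℝ)
    (g : α → Fin n → ℝ → ℝ) (a b : Fin n → ℝ),
    (∀ σ ∈ s, ∀ j, IntervalIntegrable (g σ j) volume (a j) (b j)) →
    nestedIntegral n (fun ξ => ∑ σ ∈ s, c σ * ∏ j, g σ j (ξ j)) a b
      = ∑ σ ∈ s, c σ * ∏ j, ∫ t in (a j)..(b j), g σ j t
  | 0, s, c, g, a, b, _ => by simp [nestedIntegral]
  | n + 1, s, c, g, a, b, h => by
    simp only [nestedIntegral]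
    have key : ∀ ξ : ℝ,
        nestedIntegral n (fun y => ∑ σ ∈ s, c σ * ∏ j, g σ j ((Fin.cons ξ y : Fin (n+1) → ℝ) j))
          (fun i => a i.succ) (fun i => b i.succ)
        = ∑ σ ∈ s, (c σ * g σ 0 ξ) * ∏ j : Fin n, ∫ t in (a j.succ)..(b j.succ), g σ j.succ t := by
      intro ξ
      have : (fun y : Fin n → ℝ => ∑ σ ∈ s, c σ * ∏ j, g σ j ((Fin.cons ξ y : Fin (n+1) → ℝ) j))
          = fun y => ∑ σ ∈ s, (c σ * g σ 0 ξ) * ∏ j : Fin n, g σ j.succ (y j) := by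
        funext y
        refine Finset.sum_congr rfl fun σ _ => ?_
        rw [Fin.prod_univ_succ]
        simp [mul_assoc]
      rw [this]
      exact nestedIntegral_sum_prod n s (fun σ => c σ * g σ 0 ξ)
        (fun σ j => g σ j.succ) _ _ (fun σ hσ j => h σ hσ j.succ)
    simp only [key]
    rw [intervalIntegral.integral_finset_sum]
    · refine Finset.sum_congr rfl fun σ hσ => ?_
      have : (fun ξ => (c σ * g σ 0 ξ) * ∏ j : Fin n, ∫ t in (a j.succ)..(b j.succ), g σ j.succ t)
          = fun ξ => (c σ * ∏ j : Fin n, ∫ t in (a j.succ)..(b j.succ), g σ j.succ t) * g σ 0 ξ := by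
        funext ξ; ring
      rw [this, intervalIntegral.integral_const_mul, Fin.prod_univ_succ]
      ring
    · intro σ hσ
      exact ((h σ hσ 0).const_mul (c σ)).mul_const _
lemma ftc_aux {I : Set ℝ} (hI : I.OrdConnected) {f F : ℝ → ℝ} (hf : ContinuousOn f I)
    (hF : ∀ x ∈ I, HasDerivWithinAt F (f x) I x) {a b : ℝ} (ha : a ∈ I) (hb : b ∈ I) :
    ∫ t in a..b, f t = F b - F a := by
  have huIcc : uIcc a b ⊆ I := hI.uIcc_subset ha hb
  refine intervalIntegral.integral_eq_sub_of_hasDeriv_right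
    (fun y hy => ((hF y (huIcc hy)).continuousWithinAt).mono huIcc) ?_
    ((hf.mono huIcc).intervalIntegrable)
  intro y hy
  have hyI : y ∈ I := huIcc (Ioo_subset_Icc_self hy)
  have hM : max a b ∈ I := by rcases max_cases a b with ⟨h, _⟩ | ⟨h, _⟩ <;> rw [h] <;> assumption
  have hmem : I ∈ nhdsWithin y (Ioi y) := by
    refine Filter.mem_of_superset (Ioc_mem_nhdsGT_of_mem ⟨le_refl y, hy.2⟩) ?_
    exact fun z hz => hI.out hyI hM ⟨le_of_lt hz.1, hz.2⟩
  exact (hF y hyI).mono_of_mem_nhdsWithin hmem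
lemma detM (n : ℕ) (G : Fin n → Fin (n+1) → ℝ) :
    Matrix.det (Matrix.of fun i j : Fin (n+1) => if h : (i:ℕ) < n then G ⟨i, h⟩ j else 1)
    = (-1)^n * Matrix.det (Matrix.of fun i j : Fin n => G i j.succ - G i j.castSucc) := by
  set M : Matrix (Fin (n+1)) (Fin (n+1)) ℝ :=
    Matrix.of fun i j : Fin (n+1) => if h : (i:ℕ) < n then G ⟨i, h⟩ j else 1 with hM
  set N : Matrix (Fin (n+1)) (Fin (n+1)) ℝ :=
    Matrix.of fun k j => if (k:ℕ) = (j:ℕ) + 1 then 1 else 0 with hN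
  set U : Matrix (Fin (n+1)) (Fin (n+1)) ℝ := 1 - N with hUdef
  have hU : U.det = 1 := by
    have htri : U.BlockTriangular OrderDual.toDual := by
      intro i j hij
      have hij' : (i : ℕ) < (j : ℕ) := hij
      simp only [hUdef, hN, Matrix.sub_apply, Matrix.one_apply, Matrix.of_apply]
      rw [if_neg, if_neg]
      · ring
      · omega
      · exact fun h => absurd (congrArg Fin.val h) (by omega)
    rw [Matrix.det_of_lowerTriangular U htri]
    have : ∀ i : Fin (n+1), U i i = 1 := by
      intro i
      simp only [hUdef, hN, Matrix.sub_apply, Matrix.one_apply_eq, Matrix.of_apply]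
      rw [if_neg (by omega)]; ring
    simp [this]
  have hMN : M * N = Matrix.of fun i j : Fin (n+1) =>
      if h : (j:ℕ) + 1 < n + 1 then M i ⟨(j:ℕ)+1, h⟩ else 0 := by
    funext i j
    rw [Matrix.mul_apply]
    by_cases h : (j:ℕ) + 1 < n + 1
    · have : ∀ k : Fin (n+1), N k j = if k = ⟨(j:ℕ)+1, h⟩ then 1 else 0 := by
        intro k
        simp only [hN, Matrix.of_apply, Fin.ext_iff]
      simp only [this, Matrix.of_apply, mul_ite, mul_one, mul_zero,
        Finset.sum_ite_eq', Finset.mem_univ, if_true, dif_pos h]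
    · have : ∀ k : Fin (n+1), N k j = 0 := by
        intro k
        simp only [hN, Matrix.of_apply]
        rw [if_neg (by omega)]
      simp only [this, mul_zero, Finset.sum_const_zero, Matrix.of_apply]
      rw [dif_neg (by omega)]
  have key : M.det = (M - M * N).det := by
    calc M.det = M.det * U.det := by rw [hU, mul_one]
    _ = (M * U).det := (Matrix.det_mul M U).symm
    _ = (M - M * N).det := by rw [hUdef, Matrix.mul_sub, Matrix.mul_one]
  rw [key, Matrix.det_succ_row (M - M * N) (Fin.last n)]
  have hlastrow : ∀ j : Fin (n+1), (M - M * N) (Fin.last n) j =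
      if (j:ℕ) + 1 < n + 1 then 0 else 1 := by
    intro j
    rw [Matrix.sub_apply, hMN]
    by_cases h : (j:ℕ) + 1 < n + 1
    · simp only [Matrix.of_apply, dif_pos h, if_pos h, hM]
      rw [dif_neg (by simp [Fin.last]), dif_neg (by simp [Fin.last])]
      ring
    · simp only [Matrix.of_apply, dif_neg h, if_neg h, hM]
      rw [dif_neg (by simp [Fin.last])]
      ring
  rw [Finset.sum_eq_single (Fin.last n)]
  · have hminor : (M - M * N).submatrix (Fin.last n).succAbove (Fin.last n).succAbove
        = -(Matrix.of fun i j : Fin n => G i j.succ - G i j.castSucc) := by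
      funext i j
      simp only [Matrix.submatrix_apply, Fin.succAbove_last, Matrix.sub_apply, hMN,
        Matrix.neg_apply, Matrix.of_apply]
      have hj : ((j.castSucc : Fin (n+1)) : ℕ) + 1 < n + 1 := by
        simp
      rw [dif_pos hj]
      have hi : ((i.castSucc : Fin (n+1)) : ℕ) < n := by simp
      simp only [hM, Matrix.of_apply, dif_pos hi]
      have h1 : (⟨((i.castSucc : Fin (n+1)) : ℕ), hi⟩ : Fin n) = i := rfl
      have h2 : (⟨((j.castSucc : Fin (n+1)) : ℕ) + 1, hj⟩ : Fin (n+1)) = j.succ := rfl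
      rw [h1, h2]
      ring
    rw [hminor, hlastrow, Matrix.det_neg, if_neg (by rw [Fin.val_last]; omega)]
    simp only [Fintype.card_fin]
    have : ((-1 : ℝ)) ^ ((Fin.last n : ℕ) + (Fin.last n : ℕ)) = 1 := by
      simp only [Fin.val_last]
      rw [← two_mul, pow_mul]
      norm_num
    rw [this]
    ring
  · intro j _ hj
    have hjn : (j : ℕ) ≠ n := fun h => hj (Fin.ext (by rw [Fin.val_last]; exact h))
    have hlt := j.isLt
    rw [hlastrow, if_pos (by omega)]
    ring
  · intro h
    exact absurd (Finset.mem_univ _) h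

lemma nestedIntegral_det_eq (n : ℕ) (I : Set ℝ) (hI : I.OrdConnected)
    (f F : Fin n → ℝ → ℝ) (hf : ∀ i, ContinuousOn (f i) I)
    (hF : ∀ i, ∀ x ∈ I, HasDerivWithinAt (F i) (f i x) I x)
    (x : Fin (n + 1) → ℝ) (hx : ∀ j, x j ∈ I) :
    nestedIntegral n (fun ξ => Matrix.det (Matrix.of fun i j : Fin n => f i (ξ j)))
        (fun j => x j.castSucc) (fun j => x j.succ)
    = Matrix.det (Matrix.of fun i j : Fin n => F i (x j.succ) - F i (x j.castSucc)) := by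
  have hdet : (fun ξ : Fin n → ℝ => Matrix.det (Matrix.of fun i j : Fin n => f i (ξ j)))
      = fun ξ => ∑ σ : Equiv.Perm (Fin n),
          ((Equiv.Perm.sign σ : ℤ) : ℝ) * ∏ j, f (σ j) (ξ j) := by
    funext ξ
    rw [Matrix.det_apply']
    rfl
  rw [hdet, nestedIntegral_sum_prod n Finset.univ
    (fun σ : Equiv.Perm (Fin n) => ((Equiv.Perm.sign σ : ℤ) : ℝ))
    (fun σ j => f (σ j)) _ _ ?_]
  · rw [Matrix.det_apply']
    refine Finset.sum_congr rfl fun σ _ => ?_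
    congr 1
    refine Finset.prod_congr rfl fun j _ => ?_
    exact ftc_aux hI (hf (σ j)) (hF (σ j)) (hx j.castSucc) (hx j.succ)
  · intro σ _ j
    exact ((hf (σ j)).mono (hI.uIcc_subset (hx j.castSucc) (hx j.succ))).intervalIntegrable


/-- the iterated integral of the determinant `det (f_i (ξ_j))` with constant
bounds `x_j, x_{j+1}` for the j-th variable equals `(-1)^n` times the determinant of the
`(n+1) × (n+1)` matrix whose first `n` rows are `F_i (x_j)` and whose last row is all ones. -/
theorem nested_integral_det (n : ℕ) (I : Set ℝ) (hI : I.OrdConnected)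
    (f F : Fin n → ℝ → ℝ)
    (hf : ∀ i, ContinuousOn (f i) I)
    (hF : ∀ i, ∀ x ∈ I, HasDerivWithinAt (F i) (f i x) I x)
    (x : Fin (n + 1) → ℝ) (hx : ∀ j, x j ∈ I) :
    nestedIntegral n (fun ξ => Matrix.det (Matrix.of fun i j : Fin n => f i (ξ j)))
        (fun j => x j.castSucc) (fun j => x j.succ) =
    (-1) ^ n * Matrix.det (Matrix.of fun i j : Fin (n + 1) =>
        if h : (i : ℕ) < n then F ⟨i, h⟩ (x j) else 1) := by
  have hB := detM n (fun i j => F i (x j))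
  rw [nestedIntegral_det_eq n I hI f F hf hF x hx, hB, ← mul_assoc, ← mul_pow]
  norm_num
end

section
/- Let a be a real number, let m ≥ 1 be an integer with m < a + 1, and let s₁ ≥ s₂ ≥ ⋯ ≥ s_m ≥ 0 be real numbers. Then the iterated integral ∫_{s₁}^{∞} dt₁ ∫_{s₂}^{s₁} dt₂ ⋯ ∫_{s_m}^{s_{m−1}} dt_m ∏_{k=1}^{m} t_k (1 + t_k²)^{−a−1} · ∏_{1≤j<k≤m} (t_j² − t_k²) equals ( ∏_{k=1}^{m} 1/(2a+2−2k) ) · ∏_{k=1}^{m} (1 + s_k²)^{−a} · ∏_{1≤j<k≤m} (s_j² − s_k²). -/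
/-!
Writing `t^(2k+1) (1+t²)^(-a-1)` as `t (1+t²)^(-a-1) · (t²)^k`, the integrand is
`(-1)^(m choose 2)` times `det [t_j^(2k+1) (1+t_j²)^(-a-1)]`, and the domain is a box, so expanding
the determinant turns the integral into the determinant of the one-dimensional integrals
(Andreief). For `k < a`, `t^(2k+1) (1+t²)^(-a-1)` has the antiderivative
`-(1+t²)^(-a) Q_k(t²) / (2(a-k))` vanishing at infinity, where `Q_k` is monic of degree `k`.
Since consecutive intervals share an endpoint, subtracting each row from the next leaves
`det [(1+s_j²)^(-a) Q_k(s_j²) / (2(a-k))]`, which is a Vandermonde determinant in the `s_j²`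
because the `Q_k` are monic of degree `k`.
-/

open MeasureTheory Set Filter Topology Polynomial

theorem setIntegral_univ_pi_det {n α : Type*} [Fintype n] [DecidableEq n] [MeasurableSpace α]
    {μ : n → Measure α} [∀ i, SigmaFinite (μ i)] (I : n → Set α) (f : n → α → ℝ)
    (hf : ∀ j k, IntegrableOn (f k) (I j) (μ j)) :
    ∫ t in univ.pi I, (Matrix.of fun j k => f k (t j)).det ∂Measure.pi μ =
      (Matrix.of fun j k => ∫ x in I j, f k x ∂μ j).det := by
  have hdet (M : Matrix n n ℝ) : M.det = ∑ σ : Equiv.Perm n, (σ.sign : ℝ) * ∏ j, M j (σ j) := by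
    rw [← Matrix.det_transpose, Matrix.det_apply']
    rfl
  simp_rw [Measure.restrict_pi_pi, hdet, Matrix.of_apply]
  rw [integral_finsetSum _ fun (σ : Equiv.Perm n) _ =>
    (Integrable.fintype_prod fun j => hf j (σ j)).const_mul _]
  simp_rw [integral_const_mul, integral_fintype_prod_eq_prod]

theorem det_of_sub_prev_row {R : Type*} [CommRing R] {m : ℕ} (u : ℕ → Fin m → R) :
    (Matrix.of fun j k : Fin m => u (j + 1) k - if (j : ℕ) = 0 then 0 else u j k).det =
      (Matrix.of fun j k : Fin m => u (j + 1) k).det := by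
  set S : Matrix (Fin m) (Fin m) R := Matrix.of fun j i => if (i : ℕ) + 1 = j then 1 else 0
  have hS : (1 - S).det = 1 := by
    rw [Matrix.det_of_isLowerTriangular]
    · exact Finset.prod_eq_one fun i _ => by simp [S]
    · intro i j hij
      have : (i : ℕ) < j := hij
      simp [S, Fin.ne_of_lt this]
      omega
  have hSu (j k : Fin m) :
      (S * Matrix.of fun j k : Fin m => u (j + 1) k) j k = if (j : ℕ) = 0 then 0 else u j k := by
    simp only [S, Matrix.mul_apply, Matrix.of_apply, ite_mul, one_mul, zero_mul]
    split_ifs with hj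
    · exact Finset.sum_eq_zero fun i _ => if_neg (by omega)
    · rw [Finset.sum_eq_single ⟨j - 1, by omega⟩
        (fun i _ hi => if_neg fun h => hi (Fin.ext (by simp; omega))) (by simp)]
      rw [if_pos (by simp; omega)]
      congr 1; simp; omega
  rw [← one_mul (Matrix.det (Matrix.of fun j k : Fin m => u (j + 1) k)), ← hS, ← Matrix.det_mul,
    sub_mul, one_mul]
  congr 1
  ext j k
  simp [hSu]

theorem prod_Iio_sub_eq_det_vandermonde {R : Type*} [CommRing R] {m : ℕ} (x : Fin m → R) :
    ∏ k, ∏ j ∈ Finset.Iio k, (x j - x k) = (-1) ^ m.choose 2 * (Matrix.vandermonde x).det := by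
  have hsign : ∑ k : Fin m, (Finset.Iio k).card = m.choose 2 := by
    simp [Fin.card_Iio, Fin.sum_univ_eq_sum_range (fun k => k), Finset.sum_range_id,
      Nat.choose_two_right]
  have hswap : ∏ i, ∏ j ∈ Finset.Ioi i, (x j - x i) = ∏ k, ∏ j ∈ Finset.Iio k, (x k - x j) :=
    Finset.prod_comm' fun i j => by simp
  rw [Matrix.det_vandermonde, hswap, ← hsign, ← Finset.prod_pow_eq_pow_sum,
    ← Finset.prod_mul_distrib]
  refine Finset.prod_congr rfl fun k _ => ?_
  simp_rw [← neg_sub (x k), Finset.prod_neg]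

lemma prod_Icc_one_eq_prod_fin {M : Type*} [CommMonoid M] (f : ℕ → M) (m : ℕ) :
    ∏ k ∈ Finset.Icc 1 m, f k = ∏ k : Fin m, f (k + 1) := by
  rw [← Finset.Ico_add_one_right_eq_Icc, Finset.prod_Ico_eq_prod_range,
    Fin.prod_univ_eq_prod_range (fun k => f (k + 1))]
  simp [add_comm]

lemma prod_Ico_one_eq_prod_Iio {M : Type*} [CommMonoid M] {m : ℕ} (f : ℕ → M) (k : Fin m) :
    ∏ j ∈ Finset.Ico 1 ((k : ℕ) + 1), f j = ∏ j ∈ Finset.Iio k, f (j + 1) := by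
  rw [Finset.prod_Ico_eq_prod_range, Nat.add_sub_cancel, ← Nat.Iio_eq_range,
    ← Fin.map_valEmbedding_Iio, Finset.prod_map]
  simp [add_comm]

lemma tendsto_pow_mul_one_add_rpow_neg_atTop {i : ℕ} {a : ℝ} (hi : (i : ℝ) < a) :
    Tendsto (fun x : ℝ => x ^ i * (1 + x) ^ (-a)) atTop (𝓝 0) := by
  have hdecay : Tendsto (fun x : ℝ => (1 + x) ^ ((i : ℝ) - a)) atTop (𝓝 0) := by
    simpa [Function.comp_def] using
      (tendsto_rpow_neg_atTop (sub_pos.2 hi)).comp (tendsto_atTop_add_const_left _ 1 tendsto_id)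
  refine squeeze_zero' ?_ ?_ hdecay
  · filter_upwards [eventually_ge_atTop 0] with x hx
    positivity
  · filter_upwards [eventually_ge_atTop 0] with x hx
    have hpos : 0 < 1 + x := by linarith
    calc x ^ i * (1 + x) ^ (-a) ≤ (1 + x) ^ i * (1 + x) ^ (-a) := by gcongr; linarith
      _ = (1 + x) ^ ((i : ℝ) - a) := by
        rw [sub_eq_add_neg, Real.rpow_add hpos, Real.rpow_natCast]

lemma tendsto_eval_mul_one_add_rpow_neg_atTop {p : ℝ[X]} {a : ℝ} (hp : (p.natDegree : ℝ) < a) :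
    Tendsto (fun x : ℝ => p.eval x * (1 + x) ^ (-a)) atTop (𝓝 0) := by
  simp_rw [eval_eq_sum_range, Finset.sum_mul]
  rw [← Finset.sum_const_zero (s := Finset.range (p.natDegree + 1))]
  refine tendsto_finsetSum _ fun i hi => ?_
  have hi : (i : ℝ) < a :=
    lt_of_le_of_lt (by exact_mod_cast Nat.lt_succ_iff.1 (Finset.mem_range.1 hi)) hp
  simpa [mul_assoc] using (tendsto_pow_mul_one_add_rpow_neg_atTop hi).const_mul (p.coeff i)

noncomputable def cauchyPoly (a : ℝ) : ℕ → ℝ[X]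
  | 0 => 1
  | k + 1 => X ^ (k + 1) + C ((k + 1) / (a - k)) * cauchyPoly a k

noncomputable def cauchyOddMoment (a : ℝ) (k : ℕ) (t : ℝ) : ℝ :=
  t ^ (2 * k + 1) * (1 + t ^ 2) ^ (-a - 1)

noncomputable def cauchyTail (a : ℝ) (k : ℕ) (v : ℝ) : ℝ :=
  (1 + v ^ 2) ^ (-a) * (cauchyPoly a k).eval (v ^ 2) / (2 * (a - k))

lemma natDegree_cauchyPoly (a : ℝ) (k : ℕ) : (cauchyPoly a k).natDegree = k := by
  induction k with
  | zero => simp [cauchyPoly]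
  | succ k ih =>
    rw [cauchyPoly, natDegree_add_eq_left_of_natDegree_lt, natDegree_X_pow]
    exact (natDegree_C_mul_le _ _).trans_lt (by simp [ih])

lemma monic_cauchyPoly (a : ℝ) (k : ℕ) : (cauchyPoly a k).Monic := by
  cases k with
  | zero => exact monic_one
  | succ k =>
    refine (monic_X_pow _).add_of_left (degree_lt_degree ?_)
    exact (natDegree_C_mul_le _ _).trans_lt (by simp [natDegree_cauchyPoly])

lemma cauchyPoly_ode (a : ℝ) (k : ℕ) (ha : ∀ i < k, (i : ℝ) ≠ a) :
    C a * cauchyPoly a k - (1 + X) * derivative (cauchyPoly a k) = C (a - k) * X ^ k := by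
  induction k with
  | zero => simp [cauchyPoly]
  | succ k ih =>
    have hc : C ((k + 1 : ℝ) / (a - k)) * C (a - k) = k + 1 := by
      rw [← C_mul, div_mul_cancel₀ _ (sub_ne_zero.2 (ha k k.lt_succ_self).symm)]
      simp
    have ih := ih fun i hi => ha i (hi.trans k.lt_succ_self)
    rw [cauchyPoly, derivative_add, derivative_C_mul, derivative_X_pow, Nat.add_sub_cancel]
    simp only [map_sub, map_add, map_natCast, map_one, Nat.cast_add, Nat.cast_one] at hc ih ⊢
    linear_combination C ((k + 1 : ℝ) / (a - k)) * ih + X ^ k * hc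

lemma hasDerivAt_neg_cauchyTail (a : ℝ) (k : ℕ) (ha : ∀ i ≤ k, (i : ℝ) ≠ a) (v : ℝ) :
    HasDerivAt (fun v => -cauchyTail a k v) (cauchyOddMoment a k v) v := by
  have hpos : 0 < 1 + v ^ 2 := by positivity
  have hak : a - k ≠ 0 := sub_ne_zero.2 (ha k le_rfl).symm
  have hode := congrArg (eval (v ^ 2)) (cauchyPoly_ode a k fun i hi => ha i hi.le)
  simp only [eval_sub, eval_mul, eval_C, eval_add, eval_one, eval_X, eval_pow] at hode
  have hsq : HasDerivAt (fun v : ℝ => 1 + v ^ 2) (2 * v) v := by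
    simpa using (hasDerivAt_pow 2 v).const_add 1
  have hw := hsq.rpow_const (p := -a) (Or.inl hpos.ne')
  have hq := ((cauchyPoly a k).hasDerivAt (v ^ 2)).comp v (hasDerivAt_pow 2 v)
  refine ((hw.mul hq).div_const (2 * (a - k))).neg.congr_deriv ?_
  have hsplit : (1 + v ^ 2) ^ (-a) = (1 + v ^ 2) ^ (-a - 1) * (1 + v ^ 2) := by
    rw [← Real.rpow_add_one hpos.ne', sub_add_cancel]
  simp only [cauchyOddMoment, Function.comp_apply, hsplit, Nat.cast_ofNat, Nat.add_one_sub_one,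
    pow_one]
  field_simp
  linear_combination v * hode

lemma tendsto_cauchyTail_atTop {a : ℝ} {k : ℕ} (hk : (k : ℝ) < a) :
    Tendsto (cauchyTail a k) atTop (𝓝 0) := by
  have h := (tendsto_eval_mul_one_add_rpow_neg_atTop (p := cauchyPoly a k)
    (by rwa [natDegree_cauchyPoly])).comp (tendsto_pow_atTop (two_ne_zero (α := ℕ)))
  rw [← zero_div (2 * (a - k))]
  exact (h.div_const _).congr fun v => by simp [cauchyTail, mul_comm]

lemma continuous_cauchyOddMoment (a : ℝ) (k : ℕ) : Continuous (cauchyOddMoment a k) :=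
  (continuous_pow _).mul <| (by fun_prop : Continuous fun t : ℝ => 1 + t ^ 2).rpow_const
    fun t => Or.inl (by positivity)

lemma integrableOn_Ioi_cauchyOddMoment {a : ℝ} {k : ℕ} (hk : (k : ℝ) < a) (v : ℝ) :
    IntegrableOn (cauchyOddMoment a k) (Ioi v) := by
  have hderiv := hasDerivAt_neg_cauchyTail a k fun i hi => ((Nat.cast_le.2 hi).trans_lt hk).ne
  have h0 : IntegrableOn (cauchyOddMoment a k) (Ioi 0) :=
    integrableOn_Ioi_deriv_of_nonneg (hderiv 0).continuousAt.continuousWithinAt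
      (fun x _ => hderiv x) (fun x (hx : 0 < x) => by unfold cauchyOddMoment; positivity)
      (tendsto_cauchyTail_atTop hk).neg
  refine (((continuous_cauchyOddMoment a k).integrableOn_Icc (a := v) (b := 0)).union h0).mono_set
    fun x hx => ?_
  rcases le_or_gt x 0 with h | h
  exacts [Or.inl ⟨le_of_lt hx, h⟩, Or.inr h]

lemma integral_Ioi_cauchyOddMoment {a : ℝ} {k : ℕ} (hk : (k : ℝ) < a) (v : ℝ) :
    ∫ t in Ioi v, cauchyOddMoment a k t = cauchyTail a k v := by
  have hderiv := hasDerivAt_neg_cauchyTail a k fun i hi => ((Nat.cast_le.2 hi).trans_lt hk).ne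
  simpa using integral_Ioi_of_hasDerivAt_of_tendsto (hderiv v).continuousAt.continuousWithinAt
    (fun x _ => hderiv x) (integrableOn_Ioi_cauchyOddMoment hk v) (tendsto_cauchyTail_atTop hk).neg

lemma integral_Ioo_cauchyOddMoment {a : ℝ} {k : ℕ} (ha : ∀ i ≤ k, (i : ℝ) ≠ a) {v w : ℝ}
    (hvw : v ≤ w) :
    ∫ t in Ioo v w, cauchyOddMoment a k t = cauchyTail a k v - cauchyTail a k w := by
  rw [← integral_Ioc_eq_integral_Ioo, ← intervalIntegral.integral_of_le hvw,
    intervalIntegral.integral_eq_sub_of_hasDerivAt (fun x _ => hasDerivAt_neg_cauchyTail a k ha x)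
      ((continuous_cauchyOddMoment a k).intervalIntegrable v w)]
  ring

def interlacingInterval (s : ℕ → ℝ) (j : ℕ) : Set ℝ := {x | s (j + 1) < x ∧ (0 < j → x < s j)}

lemma integrableOn_interlacingInterval_cauchyOddMoment {a : ℝ} {k : ℕ} (hk : (k : ℝ) < a)
    (s : ℕ → ℝ) (j : ℕ) : IntegrableOn (cauchyOddMoment a k) (interlacingInterval s j) :=
  (integrableOn_Ioi_cauchyOddMoment hk _).mono_set fun _ hx => hx.1

lemma setIntegral_interlacingInterval_cauchyOddMoment {a : ℝ} {k : ℕ} (hk : (k : ℝ) < a)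
    {s : ℕ → ℝ} {j : ℕ} (hs : 0 < j → s (j + 1) ≤ s j) :
    ∫ t in interlacingInterval s j, cauchyOddMoment a k t =
      cauchyTail a k (s (j + 1)) - if j = 0 then 0 else cauchyTail a k (s j) := by
  rcases Nat.eq_zero_or_pos j with rfl | hj
  · have : interlacingInterval s 0 = Ioi (s 1) := by ext; simp [interlacingInterval]
    simp [this, integral_Ioi_cauchyOddMoment hk]
  · have : interlacingInterval s j = Ioo (s (j + 1)) (s j) := by
      ext; simp [interlacingInterval, hj]
    rw [this, integral_Ioo_cauchyOddMoment (fun i hi => ((Nat.cast_le.2 hi).trans_lt hk).ne)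
      (hs hj), if_neg hj.ne']

theorem det_cauchyTail (a : ℝ) {m : ℕ} (x : Fin m → ℝ) :
    (Matrix.of fun j k : Fin m => cauchyTail a k (x j)).det =
      (∏ j, (1 + x j ^ 2) ^ (-a)) * (∏ k : Fin m, 1 / (2 * (a - k))) *
        (Matrix.vandermonde fun j => x j ^ 2).det := by
  rw [Matrix.det_eval_matrixOfPolynomials_eq_det_vandermonde _ (cauchyPoly a ·)
    (fun k => natDegree_cauchyPoly a k) (fun k => monic_cauchyPoly a k), mul_assoc,
    ← Matrix.det_mul_row, ← Matrix.det_mul_column]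
  congr 1
  ext j k
  simp only [cauchyTail, Matrix.of_apply]
  ring

theorem prod_mul_prod_Iio_sub_sq_eq_det_cauchyOddMoment (a : ℝ) {m : ℕ} (t : Fin m → ℝ) :
    (∏ k, t k * (1 + t k ^ 2) ^ (-a - 1)) * ∏ k, ∏ j ∈ Finset.Iio k, (t j ^ 2 - t k ^ 2) =
      (-1) ^ m.choose 2 * (Matrix.of fun j k : Fin m => cauchyOddMoment a k (t j)).det := by
  rw [prod_Iio_sub_eq_det_vandermonde (fun j => t j ^ 2), mul_left_comm, ← Matrix.det_mul_column]
  congr 2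
  ext j k
  simp only [cauchyOddMoment, Matrix.of_apply, Matrix.vandermonde_apply]
  ring

theorem cauchy_even_integrate_odd_general (a : ℝ) (m : ℕ) (hma : (m : ℝ) < a + 1)
    (s : ℕ → ℝ) (hdec : ∀ i, 1 ≤ i → i < m → s (i + 1) ≤ s i) :
    (∫ t in {t : Fin m → ℝ | ∀ i : Fin m,
        s ((i : ℕ) + 1) < t i ∧ (0 < (i : ℕ) → t i < s (i : ℕ))},
      (∏ k : Fin m, t k * (1 + (t k) ^ 2) ^ (-a - 1)) *
        ∏ k : Fin m, ∏ j ∈ Finset.Iio k, ((t j) ^ 2 - (t k) ^ 2)) =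
    (∏ k ∈ Finset.Icc 1 m, (1 : ℝ) / (2 * a + 2 - 2 * k)) *
      (∏ k ∈ Finset.Icc 1 m, (1 + (s k) ^ 2) ^ (-a)) *
      ∏ k ∈ Finset.Icc 1 m, ∏ j ∈ Finset.Ico 1 k, ((s j) ^ 2 - (s k) ^ 2) := by
  have hk (k : Fin m) : (k : ℝ) < a := by
    have : (k : ℝ) + 1 ≤ m := by exact_mod_cast k.isLt
    linarith
  have hbox : {t : Fin m → ℝ | ∀ i : Fin m, s ((i : ℕ) + 1) < t i ∧ (0 < (i : ℕ) → t i < s i)} =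
      univ.pi fun i : Fin m => interlacingInterval s i := by
    ext; simp [interlacingInterval]
  have hentry (j k : Fin m) := setIntegral_interlacingInterval_cauchyOddMoment (hk k)
    fun hj : 0 < (j : ℕ) => hdec j hj j.isLt
  have hconst (k : Fin m) : 1 / (2 * a + 2 - 2 * ((k + 1 : ℕ) : ℝ)) = 1 / (2 * (a - k)) := by
    push_cast; ring
  simp_rw [hbox, prod_mul_prod_Iio_sub_sq_eq_det_cauchyOddMoment]
  rw [integral_const_mul, volume_pi, setIntegral_univ_pi_det _ _
    fun j k => integrableOn_interlacingInterval_cauchyOddMoment (hk k) s j]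
  simp_rw [hentry]
  rw [det_of_sub_prev_row fun n k => cauchyTail a k (s n), det_cauchyTail,
    prod_Icc_one_eq_prod_fin, prod_Icc_one_eq_prod_fin, prod_Icc_one_eq_prod_fin]
  simp_rw [hconst, prod_Ico_one_eq_prod_Iio,
    prod_Iio_sub_eq_det_vandermonde fun j => s (j + 1) ^ 2]
  ring

/-- Cauchy case, even order.  For `m < a + 1`, integrating
`∏ t_k (1+t_k²)^{-a-1} ∏_{j<k}(t_j² - t_k²)` over the interlacing box
`t₁ ∈ (s₁,∞), t_k ∈ (s_k, s_{k-1})` yields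
`∏ 1/(2a+2-2k) ∏ (1+s_k²)^{-a} ∏_{j<k}(s_j² - s_k²)`. -/
theorem cauchy_even_integrate_odd (a : ℝ) (m : ℕ) (hm : 1 ≤ m) (hma : (m : ℝ) < a + 1)
    (s : ℕ → ℝ) (hdec : ∀ i, 1 ≤ i → i < m → s (i + 1) ≤ s i) (hsm : 0 ≤ s m) :
    (∫ t in {t : Fin m → ℝ | ∀ i : Fin m,
        s ((i : ℕ) + 1) < t i ∧ (0 < (i : ℕ) → t i < s (i : ℕ))},
      (∏ k : Fin m, t k * (1 + (t k) ^ 2) ^ (-a - 1)) *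
        ∏ k : Fin m, ∏ j ∈ Finset.Iio k, ((t j) ^ 2 - (t k) ^ 2)) =
    (∏ k ∈ Finset.Icc 1 m, (1 : ℝ) / (2 * a + 2 - 2 * k)) *
      (∏ k ∈ Finset.Icc 1 m, (1 + (s k) ^ 2) ^ (-a)) *
      ∏ k ∈ Finset.Icc 1 m, ∏ j ∈ Finset.Ico 1 k, ((s j) ^ 2 - (s k) ^ 2) :=
  cauchy_even_integrate_odd_general a m hma s hdec
end

section
/- Let m ≥ 1 and let ∞ > t₁ ≥ t₂ ≥ ⋯ ≥ t_m ≥ 0 be real numbers. Then the iterated integral ∫_{t₂}^{t₁} ds₁ ∫_{t₃}^{t₂} ds₂ ⋯ ∫_{0}^{t_m} ds_m ∏_{k=1}^{m} e^{−s_k²/2} · ∏_{1≤j<k≤m} (s_j² − s_k²) equals the determinant of the m×m matrix N defined, with τ_j := t_{m+1−j} for j = 1,…,m (so the columns correspond to t_m, t_{m−1}, …, t₁ in this order), by N_{ij} = e^{−τ_j²/2} τ_j^{2i−1} for 1 ≤ i ≤ m−1, and N_{m,j} = ∫_0^{τ_j} e^{−ξ²/2} dξ. -/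
/-!
The integrand is a weighted Vandermonde determinant in the squares `s_k²` whose column of `τ_j`
depends only on `s_{m+1-j}`, with rows `e^{-s²/2} s^{2i}`. As the domain is a product of
intervals, integrating the determinant integrates each column over its own interval (Andréief).
These intervals `(0, τ₁), (τ₁, τ₂), …, (τ_{m-1}, τ_m)` are adjacent, so adding each column to the
next turns the entries into `G_i(τ_j) = ∫₀^{τ_j} e^{-ξ²/2} ξ^{2i} dξ`. Integration by parts gives
`G_{i+1} = (2i+1) G_i - e^{-τ²/2} τ^{2i+1}`, and the corresponding row operations transform
`(G_0, …, G_{m-1})` into the rows `e^{-τ²/2} τ^{2i-1}` (`1 ≤ i < m`) followed by `G_0`.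
-/

open MeasureTheory Finset Matrix

theorem integral_pi_det_eq_det_integral {ι κ Ω : Type*} [Fintype ι] [Fintype κ] [DecidableEq κ]
    [MeasurableSpace Ω] (μ : ι → Measure Ω) [∀ i, SigmaFinite (μ i)] (e : κ ≃ ι)
    (f : κ → Ω → ℝ) (hf : ∀ k i, Integrable (f k) (μ i)) :
    ∫ x, det (of fun k l => f k (x (e l))) ∂Measure.pi μ =
      det (of fun k l => ∫ y, f k y ∂μ (e l)) := by
  have hprod (σ : Equiv.Perm κ) (x : ι → Ω) :
      ∏ l, f (σ l) (x (e l)) = ∏ i, f (σ (e.symm i)) (x i) :=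
    Fintype.prod_equiv e _ _ fun l => by simp
  simp only [det_apply', of_apply, hprod]
  rw [integral_finsetSum _ fun σ _ => (Integrable.fintype_prod fun i => hf _ i).const_mul _]
  refine Finset.sum_congr rfl fun σ _ => ?_
  rw [integral_const_mul, integral_fintype_prod_eq_prod]
  exact congrArg _ (Fintype.prod_equiv e _ _ fun l => by simp).symm

theorem det_weighted_vandermonde_rev {R : Type*} [CommRing R] {n : ℕ} (w v : Fin n → R) :
    det (of fun i j : Fin n => w (Fin.rev j) * v (Fin.rev j) ^ (i : ℕ)) =
      (∏ k, w k) * ∏ k, ∏ j ∈ Iio k, (v j - v k) := by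
  rw [show (of fun i j : Fin n => w (Fin.rev j) * v (Fin.rev j) ^ (i : ℕ)) =
      of fun i j => (w ∘ Fin.rev) j * (vandermonde (v ∘ Fin.rev))ᵀ i j by ext; simp,
    det_mul_row, det_transpose, det_vandermonde]
  congr 1
  · exact Fintype.prod_equiv Fin.revPerm _ _ fun k => rfl
  · refine Fintype.prod_equiv Fin.revPerm _ _ fun k => ?_
    conv_rhs => rw [← Fin.rev_rev (Fin.revPerm k)]
    rw [← Fin.map_revPerm_Ioi, prod_map]
    simp

theorem det_rotate_rows_neg_tail {R : Type*} [CommRing R] {n : ℕ}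
    (N : Matrix (Fin (n + 1)) (Fin (n + 1)) R) :
    det (of fun i j => (Fin.cons 1 fun _ => -1 : Fin (n + 1) → R) i *
      N.submatrix (finRotate (n + 1)).symm id i j) = det N := by
  rw [det_mul_column, det_permute, Fin.prod_cons]
  simp [sign_finRotate, ← mul_assoc, ← pow_add, ← two_mul, pow_mul]

theorem setIntegral_Ioo_eq_sub_intervalIntegral {f : ℝ → ℝ} (hf : Continuous f) {a b : ℝ}
    (hab : a ≤ b) : ∫ x in Set.Ioo a b, f x = (∫ x in 0..b, f x) - ∫ x in 0..a, f x := by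
  rw [intervalIntegral.integral_interval_sub_left (hf.intervalIntegrable _ _)
    (hf.intervalIntegrable _ _), intervalIntegral.integral_of_le hab, integral_Ioc_eq_integral_Ioo]

theorem det_setIntegral_Ioo_eq_det_intervalIntegral {n : ℕ} (f : Fin (n + 1) → ℝ → ℝ)
    (hf : ∀ i, Continuous (f i)) (a b : Fin (n + 1) → ℝ) (hab : ∀ j, a j ≤ b j) (ha₀ : a 0 = 0)
    (ha : ∀ j : Fin n, a j.succ = b j.castSucc) :
    det (of fun i j => ∫ x in Set.Ioo (a j) (b j), f i x) =
      det (of fun i j => ∫ x in 0..b j, f i x) := by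
  refine (det_eq_of_forall_col_eq_smul_add_pred (fun _ => 1) (fun i => ?_) fun i j => ?_).symm
  · rw [of_apply, of_apply, setIntegral_Ioo_eq_sub_intervalIntegral (hf i) (hab 0), ha₀,
      intervalIntegral.integral_same, sub_zero]
  · rw [of_apply, of_apply, of_apply, setIntegral_Ioo_eq_sub_intervalIntegral (hf i) (hab _), ha,
      one_mul, sub_add_cancel]

noncomputable def gaussEvenMonomial (i : ℕ) (x : ℝ) : ℝ := Real.exp (-x ^ 2 / 2) * x ^ (2 * i)

noncomputable def gaussEvenPrimitive (i : ℕ) (τ : ℝ) : ℝ :=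
  ∫ ξ in (0 : ℝ)..τ, gaussEvenMonomial i ξ

@[fun_prop]
theorem continuous_gaussEvenMonomial (i : ℕ) : Continuous (gaussEvenMonomial i) := by
  unfold gaussEvenMonomial; fun_prop

theorem hasDerivAt_exp_mul_pow_odd (i : ℕ) (x : ℝ) :
    HasDerivAt (fun y => Real.exp (-y ^ 2 / 2) * y ^ (2 * i + 1))
      ((2 * i + 1) * gaussEvenMonomial i x - gaussEvenMonomial (i + 1) x) x := by
  refine (((hasDerivAt_pow 2 x).fun_neg.div_const 2).exp.fun_mul
    (hasDerivAt_pow (2 * i + 1) x)).congr_deriv ?_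
  simp only [gaussEvenMonomial, Nat.add_sub_cancel]
  push_cast
  ring

theorem gaussEvenPrimitive_succ (i : ℕ) (τ : ℝ) :
    gaussEvenPrimitive (i + 1) τ =
      (2 * i + 1) * gaussEvenPrimitive i τ - Real.exp (-τ ^ 2 / 2) * τ ^ (2 * i + 1) := by
  have hftc : ∫ x in (0 : ℝ)..τ, (2 * i + 1) * gaussEvenMonomial i x - gaussEvenMonomial (i + 1) x =
      Real.exp (-τ ^ 2 / 2) * τ ^ (2 * i + 1) := by
    have hcont : Continuous fun x =>
        (2 * i + 1) * gaussEvenMonomial i x - gaussEvenMonomial (i + 1) x := by fun_prop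
    simpa using intervalIntegral.integral_eq_sub_of_hasDerivAt
      (fun x _ => hasDerivAt_exp_mul_pow_odd i x) (hcont.intervalIntegrable 0 τ)
  rw [intervalIntegral.integral_sub
    (((continuous_gaussEvenMonomial i).intervalIntegrable _ _).const_mul _)
    ((continuous_gaussEvenMonomial _).intervalIntegrable _ _),
    intervalIntegral.integral_const_mul] at hftc
  rw [gaussEvenPrimitive, gaussEvenPrimitive]
  linarith

theorem prod_exp_mul_prod_sq_sub_eq_det (n : ℕ) (u : Fin n → ℝ) :
    (∏ k, Real.exp (-(u k) ^ 2 / 2)) * ∏ k, ∏ j ∈ Iio k, (u j ^ 2 - u k ^ 2) =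
      det (of fun i j : Fin n => gaussEvenMonomial i (u (Fin.revPerm j))) := by
  rw [← det_weighted_vandermonde_rev]
  simp only [gaussEvenMonomial, pow_mul, Fin.revPerm_apply]

/-- The recursion `G_{k+1} = (2k+1) G_k - e^{-τ²/2} τ^{2k+1}` becomes a chain of row operations
once the last row is rotated to the top and the others are negated. -/
theorem det_gaussEvenPrimitive (n : ℕ) (τ : Fin (n + 1) → ℝ) :
    det (of fun i j : Fin (n + 1) => gaussEvenPrimitive i (τ j)) =
      det (of fun i j : Fin (n + 1) =>
        if (i : ℕ) + 1 < n + 1 then Real.exp (-(τ j) ^ 2 / 2) * τ j ^ (2 * (i : ℕ) + 1)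
        else gaussEvenPrimitive 0 (τ j)) := by
  refine Eq.trans ?_ (det_rotate_rows_neg_tail _)
  refine det_eq_of_forall_row_eq_smul_add_pred (fun k => 2 * (k : ℕ) + 1) (fun j => ?_)
    fun k j => ?_
  · simp
  · have hk : k.succ - 1 = k.castSucc := by rw [← Fin.coeSucc_eq_succ, add_sub_cancel_right]
    simp only [of_apply, submatrix_apply, id, finRotate_symm_apply, hk, Fin.cons_succ,
      Fin.val_succ, Fin.val_castSucc, add_lt_add_iff_right, Fin.is_lt, ↓reduceIte,
      gaussEvenPrimitive_succ]
    ring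

/-- Gauss case, even order `n = 2m`, integrating out the even-indexed
singular values over the interlacing box `s_k ∈ (t_{k+1}, t_k)`, `s_m ∈ (0, t_m)`,
gives an `m×m` determinant with columns indexed by `τ_j = t_{m+1-j}`, rows
`e^{-τ²/2} τ^{2i-1}` and a final row of incomplete Gaussian integrals `∫_0^τ e^{-ξ²/2} dξ`. -/
theorem gauss_even_integrate_even (m : ℕ) (hm : 1 ≤ m) (t : ℕ → ℝ)
    (hdec : ∀ i, 1 ≤ i → i < m → t (i + 1) ≤ t i) (htm : 0 ≤ t m) :
    (∫ u in {u : Fin m → ℝ | ∀ i : Fin m,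
        (if (i : ℕ) + 1 < m then t ((i : ℕ) + 2) else 0) < u i ∧ u i < t ((i : ℕ) + 1)},
      (∏ k : Fin m, Real.exp (-(u k) ^ 2 / 2)) *
        ∏ k : Fin m, ∏ j ∈ Finset.Iio k, ((u j) ^ 2 - (u k) ^ 2)) =
    Matrix.det (Matrix.of fun i j : Fin m =>
      if (i : ℕ) + 1 < m then
        Real.exp (-(t (m - (j : ℕ))) ^ 2 / 2) * (t (m - (j : ℕ))) ^ (2 * (i : ℕ) + 1)
      else ∫ ξ in (0 : ℝ)..(t (m - (j : ℕ))), Real.exp (-ξ ^ 2 / 2)) := by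
  obtain ⟨n, rfl⟩ : ∃ n, m = n + 1 := ⟨m - 1, by omega⟩
  set lo : Fin (n + 1) → ℝ := fun k => if (k : ℕ) + 1 < n + 1 then t (k + 2) else 0
  set hi : Fin (n + 1) → ℝ := fun k => t (k + 1)
  have hbox : {u : Fin (n + 1) → ℝ | ∀ k, lo k < u k ∧ u k < hi k} =
      Set.univ.pi fun k => Set.Ioo (lo k) (hi k) := by
    ext; simp
  have hlo_le_hi (k : Fin (n + 1)) : lo k ≤ hi k := by
    simp only [lo, hi]
    split_ifs with h
    · exact hdec _ (by omega) (by omega)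
    · rwa [show (k : ℕ) = n by omega]
  have hadj (j : Fin n) : lo (Fin.revPerm j.succ) = hi (Fin.revPerm j.castSucc) := by
    simp only [lo, hi, Fin.revPerm_apply, Fin.val_rev, Fin.val_succ, Fin.val_castSucc]
    rw [if_pos (by omega)]
    congr 1
    omega
  have hcol (j : Fin (n + 1)) : hi (Fin.rev j) = t (n + 1 - j) := by
    simp only [hi, Fin.val_rev]; congr 1; omega
  rw [hbox, volume_pi, Measure.restrict_pi_pi]
  simp_rw [prod_exp_mul_prod_sq_sub_eq_det]
  rw [integral_pi_det_eq_det_integral _ Fin.revPerm _ fun i k =>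
      (continuous_gaussEvenMonomial i).integrableOn_Icc.mono_set Set.Ioo_subset_Icc_self,
    det_setIntegral_Ioo_eq_det_intervalIntegral _ (fun i => continuous_gaussEvenMonomial i)
      (fun j => lo (Fin.revPerm j)) (fun j => hi (Fin.revPerm j)) (fun j => hlo_le_hi _)
      (by simp [lo]) hadj]
  refine (det_gaussEvenPrimitive n fun j => hi (Fin.revPerm j)).trans ?_
  simp [hcol, gaussEvenPrimitive, gaussEvenMonomial]
end

section
/- Let ω ∈ (0,∞], let w : (−ω,ω) → ℝ be continuous with w(x) > 0 for all x and w(0) = 1, let φ : (−ω,ω) → ℝ, and suppose the product φw is differentiable. Suppose there exist real numbers α₁, α₂, β₂ such that for all x ∈ (−ω,ω): x² w(x) = −α₁ x (φw)′(x) and (x² − β₂ + α₂ φ(x)) w(x) = −α₂ x (φw)′(x). Then: (a) α₁ ≠ 0 and α₂ ≠ 0; (b) β₂ = α₂ φ(0); and (c) for all x ∈ (−ω,ω), φ(x) = φ(0) + τ x², where τ = (α₂ − α₁)/(α₂ α₁). -/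
/-- intermediate steps of the classification, Theorem 4.1: for a positive
continuous weight `w` on `(-ω,ω)` with `w(0) = 1` and differentiable `φw` satisfying the
`k = 1` and `k = 2` differentiated recurrences, the coefficients `α₁, α₂` are nonzero,
`β₂ = α₂ φ(0)`, and `φ(x) = φ(0) + τ x²` with `τ = (α₂ - α₁)/(α₂ α₁)`. -/
theorem admissible_weight_phi_quadratic (ω : EReal) (hω : (0 : EReal) < ω)
    (w φ : ℝ → ℝ)
    (hwc : ContinuousOn w {x : ℝ | -ω < (x : EReal) ∧ (x : EReal) < ω})
    (hwpos : ∀ x : ℝ, -ω < (x : EReal) → (x : EReal) < ω → 0 < w x)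
    (hw0 : w 0 = 1)
    (hdiff : ∀ x : ℝ, -ω < (x : EReal) → (x : EReal) < ω →
      DifferentiableAt ℝ (fun y => φ y * w y) x)
    (α₁ α₂ β₂ : ℝ)
    (heq1 : ∀ x : ℝ, -ω < (x : EReal) → (x : EReal) < ω →
      x ^ 2 * w x = -α₁ * x * deriv (fun y => φ y * w y) x)
    (heq2 : ∀ x : ℝ, -ω < (x : EReal) → (x : EReal) < ω →
      (x ^ 2 - β₂ + α₂ * φ x) * w x = -α₂ * x * deriv (fun y => φ y * w y) x) :
    α₁ ≠ 0 ∧ α₂ ≠ 0 ∧ β₂ = α₂ * φ 0 ∧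
      ∀ x : ℝ, -ω < (x : EReal) → (x : EReal) < ω →
        φ x = φ 0 + ((α₂ - α₁) / (α₂ * α₁)) * x ^ 2 := by
  have hn0 : -ω < (0:EReal) := by
    have := EReal.neg_lt_neg_iff.mpr hω
    simpa using this
  -- pick a positive real point r in the interval
  obtain ⟨c, hc0, hcω⟩ := exists_between hω
  have hcT : c ≠ ⊤ := (hcω.trans_le le_top).ne
  have hcB : c ≠ ⊥ := (lt_trans (by simp : (⊥:EReal) < 0) hc0).ne'
  lift c to ℝ using ⟨hcT, hcB⟩ with r
  have hr0 : (0:ℝ) < r := by exact_mod_cast hc0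
  have hrl : -ω < (r:EReal) := lt_trans hn0 (by exact_mod_cast hc0)
  have hwr := hwpos r hrl hcω
  have h1r := heq1 r hrl hcω
  have h2r := heq2 r hrl hcω
  have hα₁ : α₁ ≠ 0 := by
    intro h
    rw [h] at h1r
    simp at h1r
    rcases h1r with h1r | h1r <;> nlinarith
  have hα₂ : α₂ ≠ 0 := by
    intro h
    have h20 := heq2 0 hn0 hω
    rw [h, hw0] at h20
    simp at h20
    rw [h] at h2r
    simp at h2r
    rcases h2r with h2r | h2r <;> nlinarith
  have h20 := heq2 0 hn0 hω
  rw [hw0] at h20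
  simp at h20
  have hβ : β₂ = α₂ * φ 0 := by linarith
  refine ⟨hα₁, hα₂, hβ, fun x hxl hxr => ?_⟩
  have h1 := heq1 x hxl hxr
  have h2 := heq2 x hxl hxr
  have hw := hwpos x hxl hxr
  have key : α₂ * (x ^ 2 * w x) = α₁ * ((x ^ 2 - β₂ + α₂ * φ x) * w x) := by
    rw [h1, h2]; ring
  have key2 : α₂ * x ^ 2 = α₁ * (x ^ 2 - β₂ + α₂ * φ x) := by
    have := mul_right_cancel₀ hw.ne' (by linarith [key] : (α₂ * x ^ 2) * w x = (α₁ * (x ^ 2 - β₂ + α₂ * φ x)) * w x)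
    exact this
  rw [hβ] at key2
  field_simp
  nlinarith [key2]
end

section
/- Let G be a polynomial with real coefficients, and let G₁ be the polynomial G₁(ξ) = G(1 − (ξ−1)²). Then for every natural number k, (1/(2k)!) · G₁^{(2k)}(1) − (1/(2k+1)!) · G₁^{(2k+1)}(1) = ((−1)^k / k!) · G^{(k)}(1), where F^{(j)} denotes the j-th derivative of the polynomial F. -/
open Polynomial

private lemma iter_deriv_eval_one (p : Polynomial ℝ) (n : ℕ) :
    ((fun q : Polynomial ℝ => Polynomial.derivative q)^[n] p).eval 1 =
      (n.factorial : ℝ) * (taylor (1 : ℝ) p).coeff n := by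
  have h := Polynomial.factorial_smul_hasseDeriv (R := ℝ) n
  have : (fun q : Polynomial ℝ => Polynomial.derivative q)^[n] p
      = n.factorial • Polynomial.hasseDeriv n p := by
    rw [← congrFun h p]; rfl
  rw [this, taylor_coeff]
  simp [nsmul_eq_mul]

private lemma comp_neg_X_sq_coeff_even (P : Polynomial ℝ) (k : ℕ) :
    (P.comp (-(X ^ 2))).coeff (2 * k) = (-1) ^ k * P.coeff k := by
  rw [comp_eq_sum_left, Polynomial.sum_def, finset_sum_coeff]
  have hterm : ∀ e : ℕ, (C (P.coeff e) * (-(X ^ 2 : Polynomial ℝ)) ^ e).coeff (2 * k)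
      = if e = k then (-1) ^ k * P.coeff k else 0 := by
    intro e
    have : (-(X ^ 2 : Polynomial ℝ)) ^ e = C ((-1) ^ e) * X ^ (2 * e) := by
      rw [neg_pow, ← pow_mul]
      simp [mul_comm]
    rw [this, ← mul_assoc, ← C_mul, coeff_C_mul, coeff_X_pow]
    by_cases he : e = k <;> simp [he, mul_comm]
    omega
  rw [Finset.sum_congr rfl fun e _ => hterm e]
  by_cases hk : k ∈ P.support
  · rw [Finset.sum_ite_eq' P.support k (fun _ => (-1) ^ k * P.coeff k)]
    simp [hk]
  · rw [Finset.sum_ite_eq' P.support k (fun _ => (-1) ^ k * P.coeff k)]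
    simp [hk, Polynomial.notMem_support_iff.mp hk]

private lemma comp_neg_X_sq_coeff_odd (P : Polynomial ℝ) (k : ℕ) :
    (P.comp (-(X ^ 2))).coeff (2 * k + 1) = 0 := by
  rw [comp_eq_sum_left, Polynomial.sum_def, finset_sum_coeff]
  refine Finset.sum_eq_zero fun e _ => ?_
  have : (-(X ^ 2 : Polynomial ℝ)) ^ e = C ((-1) ^ e) * X ^ (2 * e) := by
    rw [neg_pow, ← pow_mul]
    simp [mul_comm]
  rw [this, ← mul_assoc, ← C_mul, coeff_C_mul, coeff_X_pow]
  have : ¬ (2 * k + 1 = 2 * e) := by omega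
  simp [this]

/-- first identity of Lemma 6.4: for a real polynomial `G` and
`G₁(ξ) = G(1 - (ξ-1)²)`, the linear functional
`(1/(2k)!) F^{(2k)}(1) - (1/(2k+1)!) F^{(2k+1)}(1)` applied to `G₁` equals
`((-1)^k / k!) G^{(k)}(1)`. -/
theorem derivative_lemma_first (G : Polynomial ℝ) (k : ℕ) :
    (1 / (Nat.factorial (2 * k) : ℝ)) *
        ((fun p : Polynomial ℝ => Polynomial.derivative p)^[2 * k]
          (G.comp (1 - (Polynomial.X - 1) ^ 2))).eval 1 -
      (1 / (Nat.factorial (2 * k + 1) : ℝ)) *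
        ((fun p : Polynomial ℝ => Polynomial.derivative p)^[2 * k + 1]
          (G.comp (1 - (Polynomial.X - 1) ^ 2))).eval 1 =
    ((-1) ^ k / (Nat.factorial k : ℝ)) *
      ((fun p : Polynomial ℝ => Polynomial.derivative p)^[k] G).eval 1 := by
  rw [iter_deriv_eval_one, iter_deriv_eval_one, iter_deriv_eval_one]
  have h1 : taylor (1 : ℝ) (G.comp (1 - (X - 1) ^ 2))
      = (taylor (1 : ℝ) G).comp (-(X ^ 2)) := by
    rw [taylor_apply, taylor_apply, comp_assoc, comp_assoc]
    congr 1
    simp [sub_comp, add_comp, one_comp, X_comp, pow_comp]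
    ring
  rw [h1, comp_neg_X_sq_coeff_even, comp_neg_X_sq_coeff_odd]
  have hf : (Nat.factorial (2 * k) : ℝ) ≠ 0 := Nat.cast_ne_zero.mpr (Nat.factorial_ne_zero _)
  have hf2 : (Nat.factorial k : ℝ) ≠ 0 := Nat.cast_ne_zero.mpr (Nat.factorial_ne_zero _)
  field_simp
  ring
end

section
/- Let G be a polynomial with real coefficients, and let H be the polynomial H(ξ) = ξ · G(1 − (ξ−1)²). Then for every natural number k, (1/(2k)!) · H^{(2k)}(1) − (1/(2k+1)!) · H^{(2k+1)}(1) = 0, where F^{(j)} denotes the j-th derivative of the polynomial F. -/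
/-! Expanding `H(ξ) = ξ · G(1 - (ξ-1)²)` in `t = ξ - 1` gives `H(1 + t) = (1 + t) · E(t²)` with
`E(s) = G(1 - s)`. Since `E(t²)` is even, the Taylor coefficients of `H` at `1` of orders `2k` and
`2k + 1` both equal the `k`-th coefficient of `E`, and the `j`-th Taylor coefficient is
`H^{(j)}(1) / j!`. -/

open Polynomial

namespace Polynomial

variable {R : Type*}

theorem eval_iterate_derivative_eq_factorial_mul_taylor_coeff [CommSemiring R] (p : R[X])
    (r : R) (j : ℕ) : (derivative^[j] p).eval r = j.factorial * (taylor r p).coeff j := by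
  rw [taylor_coeff, ← factorial_smul_hasseDeriv, LinearMap.smul_apply, eval_smul, nsmul_eq_mul]

theorem taylor_one_X_mul_comp_one_sub_sq [CommRing R] (G : R[X]) :
    taylor 1 (X * G.comp (1 - (X - 1) ^ 2)) = (X + 1) * expand R 2 (G.comp (1 - X)) := by
  have h : ((1 : R[X]) - (X - 1) ^ 2).comp (X + C 1) = ((1 : R[X]) - X).comp (X ^ 2) := by
    simp only [sub_comp, pow_comp, X_comp, one_comp, map_one]
    ring
  rw [taylor_apply, mul_comp, comp_assoc, h, expand_eq_comp_X_pow, comp_assoc]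
  simp

theorem coeff_X_add_one_mul_expand_two_even [CommSemiring R] (q : R[X]) (k : ℕ) :
    ((X + 1) * expand R 2 q).coeff (2 * k) = q.coeff k := by
  rcases k with _ | k
  · simpa using coeff_expand_mul' two_pos q 0
  · rw [add_mul, one_mul, coeff_add, coeff_expand_mul' two_pos,
      show 2 * (k + 1) = 2 * k + 1 + 1 by ring, coeff_X_mul, coeff_expand two_pos]
    simp

theorem coeff_X_add_one_mul_expand_two_odd [CommSemiring R] (q : R[X]) (k : ℕ) :
    ((X + 1) * expand R 2 q).coeff (2 * k + 1) = q.coeff k := by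
  rw [add_mul, one_mul, coeff_add, coeff_X_mul, coeff_expand_mul' two_pos, coeff_expand two_pos]
  simp

end Polynomial

/-- second identity of Lemma 6.4: for a real polynomial `G` and
`H(ξ) = ξ · G(1 - (ξ-1)²)`, the linear functional
`(1/(2k)!) F^{(2k)}(1) - (1/(2k+1)!) F^{(2k+1)}(1)` annihilates `H`. -/
theorem derivative_lemma_second (G : Polynomial ℝ) (k : ℕ) :
    (1 / (Nat.factorial (2 * k) : ℝ)) *
        ((fun p : Polynomial ℝ => Polynomial.derivative p)^[2 * k]
          (Polynomial.X * G.comp (1 - (Polynomial.X - 1) ^ 2))).eval 1 -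
      (1 / (Nat.factorial (2 * k + 1) : ℝ)) *
        ((fun p : Polynomial ℝ => Polynomial.derivative p)^[2 * k + 1]
          (Polynomial.X * G.comp (1 - (Polynomial.X - 1) ^ 2))).eval 1 = 0 := by
  simp only [eval_iterate_derivative_eq_factorial_mul_taylor_coeff,
    taylor_one_X_mul_comp_one_sub_sq, coeff_X_add_one_mul_expand_two_even,
    coeff_X_add_one_mul_expand_two_odd]
  field_simp
  ring
end

section
/- Let ω ∈ (0,∞], let w : (−ω,ω) → ℝ be continuous with w(x) > 0 for all x ∈ (−ω,ω), let N ≥ 1, and let p₁,…,p_N be real polynomials satisfying the orthonormality relations ∫_{−ω}^{ω} w(x) p_i(x) p_j(x) dx = δ_{ij} for all 1 ≤ i,j ≤ N. Let 0 < s < ω and define the N×N matrix M by M_{ij} = ∫_{−s}^{s} w(x) p_i(x) p_j(x) dx. Then M is symmetric, and for every nonzero vector v ∈ ℝ^N one has 0 < vᵀ M v < vᵀ v; in particular, every eigenvalue of M lies in the open interval (0,1). -/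
/-!
With `q = ∑ i, v i • p i`, the quadratic form `vᵀ M v` is `∫_{-s}^{s} w q²`, while
orthonormality turns `vᵀ v` into `∫_{-ω}^{ω} w q²`. Since `w > 0` and a nonzero polynomial
vanishes only at finitely many points, `∫ w q²` is positive over every set containing a
nondegenerate interval; applied to `(-s, s)` and to its complement in `(-ω, ω)` this gives
`0 < vᵀ M v < vᵀ v`. The eigenvalue bounds follow by taking `v` to be an eigenvector.
-/

open MeasureTheory Set Polynomial Matrix

section WeightedGram

variable {α ι : Type*} [MeasurableSpace α]

noncomputable def weightedGram (μ : Measure α) (w : α → ℝ) (f : ι → α → ℝ) : Matrix ι ι ℝ :=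
  Matrix.of fun i j => ∫ x, w x * f i x * f j x ∂μ

variable {μ : Measure α} {w : α → ℝ} {f : ι → α → ℝ}

theorem weightedGram_isSymm : (weightedGram μ w f).IsSymm :=
  Matrix.IsSymm.ext fun i j => by simp only [weightedGram, Matrix.of_apply, mul_right_comm]

theorem integrable_weight_mul_mul (hw : 0 ≤ᵐ[μ] w) {i j : ι}
    (hi : Integrable (fun x => w x * f i x * f i x) μ)
    (hj : Integrable (fun x => w x * f j x * f j x) μ)
    (hm : AEStronglyMeasurable (fun x => w x * f i x * f j x) μ) :
    Integrable (fun x => w x * f i x * f j x) μ := by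
  refine ((hi.add hj).div_const 2).mono' hm ?_
  filter_upwards [hw] with x hwx
  rw [Pi.add_apply, Real.norm_eq_abs, abs_le]
  constructor <;> nlinarith [mul_nonneg hwx (sq_nonneg (f i x - f j x)),
    mul_nonneg hwx (sq_nonneg (f i x + f j x))]

theorem mul_sum_sq_eq_sum_sum [Fintype ι] (c : ℝ) (a v : ι → ℝ) :
    c * (∑ i, v i * a i) ^ 2 = ∑ i, ∑ j, v i * v j * (c * a i * a j) := by
  rw [sq, Finset.sum_mul_sum, Finset.mul_sum]
  refine Finset.sum_congr rfl fun i _ => ?_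
  rw [Finset.mul_sum]
  exact Finset.sum_congr rfl fun j _ => by ring

variable [Fintype ι] (hint : ∀ i j, Integrable (fun x => w x * f i x * f j x) μ) (v : ι → ℝ)
include hint

theorem integrable_weight_mul_sum_sq :
    Integrable (fun x => w x * (∑ i, v i * f i x) ^ 2) μ := by
  simp only [mul_sum_sq_eq_sum_sum]
  exact integrable_finsetSum _ fun i _ => integrable_finsetSum _ fun j _ => (hint i j).const_mul _

theorem dotProduct_weightedGram_mulVec :
    v ⬝ᵥ (weightedGram μ w f *ᵥ v) = ∫ x, w x * (∑ i, v i * f i x) ^ 2 ∂μ := by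
  simp only [mul_sum_sq_eq_sum_sum]
  rw [integral_finsetSum _ fun i _ => integrable_finsetSum _ fun j _ => (hint i j).const_mul _]
  simp only [dotProduct, Matrix.mulVec, weightedGram, Matrix.of_apply, Finset.mul_sum]
  refine Finset.sum_congr rfl fun i _ => ?_
  rw [integral_finsetSum _ fun j _ => (hint i j).const_mul _]
  exact Finset.sum_congr rfl fun j _ => by rw [integral_const_mul]; ring

end WeightedGram

theorem Matrix.eigenvalue_mem_Ioo_of_dotProduct_mulVec_mem_Ioo {ι : Type*} [Fintype ι]
    {M : Matrix ι ι ℝ} (hM : ∀ v ≠ 0, 0 < v ⬝ᵥ (M *ᵥ v) ∧ v ⬝ᵥ (M *ᵥ v) < v ⬝ᵥ v)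
    {c : ℝ} {v : ι → ℝ} (hv : v ≠ 0) (hMv : M *ᵥ v = c • v) : 0 < c ∧ c < 1 := by
  obtain ⟨hpos, hlt⟩ := hM v hv
  rw [hMv, dotProduct_smul, smul_eq_mul] at hpos hlt
  have hvv : 0 < v ⬝ᵥ v := hpos.trans hlt
  exact ⟨pos_of_mul_pos_left hpos hvv.le, (mul_lt_iff_lt_one_left hvv).1 hlt⟩

theorem setIntegral_weight_mul_eval_sq_pos {T : Set ℝ} (hT : MeasurableSet T) {w : ℝ → ℝ}
    (hw : ∀ x ∈ T, 0 < w x) {q : ℝ[X]} (hq : q ≠ 0)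
    (hint : IntegrableOn (fun x => w x * q.eval x ^ 2) T) {a b : ℝ} (hab : a < b)
    (habT : Ioo a b ⊆ T) : 0 < ∫ x in T, w x * q.eval x ^ 2 := by
  have hnonneg : 0 ≤ᵐ[volume.restrict T] fun x => w x * q.eval x ^ 2 := by
    filter_upwards [ae_restrict_mem hT] with x hx
    exact mul_nonneg (hw x hx).le (sq_nonneg _)
  rw [setIntegral_pos_iff_support_of_nonneg_ae hnonneg hint]
  have hroots : volume {x : ℝ | q.IsRoot x} = 0 := (finite_setOfPred_isRoot hq).measure_zero _
  have hsupport : Ioo a b \ {x | q.IsRoot x} ⊆ Function.support (fun x => w x * q.eval x ^ 2) ∩ T :=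
    fun x ⟨hx, hroot⟩ => ⟨mul_ne_zero (hw x (habT hx)).ne' (pow_ne_zero _ hroot), habT hx⟩
  refine lt_of_lt_of_le ?_ (measure_mono hsupport)
  rw [measure_sdiff_null hroots, Real.volume_Ioo]
  exact ENNReal.ofReal_pos.2 (sub_pos.2 hab)

theorem eval_sum_smul {ι : Type*} [Fintype ι] (p : ι → ℝ[X]) (v : ι → ℝ) (x : ℝ) :
    (∑ i, v i • p i).eval x = ∑ i, v i * (p i).eval x := by
  simp [eval_finsetSum]

theorem dotProduct_weightedGram_mulVec_mem_Ioo {ι : Type*} [Fintype ι] [DecidableEq ι]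
    {S T : Set ℝ} (hS : MeasurableSet S) (hT : MeasurableSet T) (hTS : T ⊆ S) {w : ℝ → ℝ}
    (hwm : AEStronglyMeasurable w (volume.restrict S)) (hw : ∀ x ∈ S, 0 < w x) {p : ι → ℝ[X]}
    (horth : weightedGram (volume.restrict S) w (fun i => (p i).eval) = 1)
    {a b c d : ℝ} (hab : a < b) (habT : Ioo a b ⊆ T) (hcd : c < d) (hcdS : Ioo c d ⊆ S \ T)
    {v : ι → ℝ} (hv : v ≠ 0) :
    0 < v ⬝ᵥ (weightedGram (volume.restrict T) w (fun i => (p i).eval) *ᵥ v) ∧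
      v ⬝ᵥ (weightedGram (volume.restrict T) w (fun i => (p i).eval) *ᵥ v) < v ⬝ᵥ v := by
  have hdiag : ∀ i, IntegrableOn (fun x => w x * (p i).eval x * (p i).eval x) S := fun i =>
    Integrable.of_integral_ne_zero <| by
      have := congrFun (congrFun horth i) i
      simp only [weightedGram, Matrix.of_apply, Matrix.one_apply_eq] at this
      exact this ▸ one_ne_zero
  have hint : ∀ i j, IntegrableOn (fun x => w x * (p i).eval x * (p j).eval x) S := fun i j =>
    integrable_weight_mul_mul (f := fun i => (p i).eval)
      (ae_restrict_of_forall_mem hS fun x hx => (hw x hx).le) (hdiag i) (hdiag j)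
      ((hwm.mul (p i).continuous.aestronglyMeasurable).mul (p j).continuous.aestronglyMeasurable)
  set q := ∑ i, v i • p i
  have hquad : ∀ U ⊆ S, v ⬝ᵥ (weightedGram (volume.restrict U) w (fun i => (p i).eval) *ᵥ v) =
      ∫ x in U, w x * q.eval x ^ 2 := fun U hU => by
    simp only [q, eval_sum_smul]
    exact dotProduct_weightedGram_mulVec (fun i j => (hint i j).mono_set hU) v
  have hnorm : v ⬝ᵥ v = ∫ x in S, w x * q.eval x ^ 2 := by
    rw [← hquad S subset_rfl, horth, Matrix.one_mulVec]
  have hq : q ≠ 0 := fun h0 => hv <| dotProduct_self_eq_zero.1 <| by simp [hnorm, h0]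
  have hintq : IntegrableOn (fun x => w x * q.eval x ^ 2) S := by
    simp only [q, eval_sum_smul]
    exact integrable_weight_mul_sum_sq hint v
  have hinner := setIntegral_weight_mul_eval_sq_pos hT (fun x hx => hw x (hTS hx)) hq
    (hintq.mono_set hTS) hab habT
  have houter := setIntegral_weight_mul_eval_sq_pos (hS.diff hT) (fun x hx => hw x hx.1) hq
    (hintq.mono_set sdiff_subset) hcd hcdS
  rw [setIntegral_sdiff hT hintq hTS] at houter
  rw [hquad T hTS, hnorm]
  exact ⟨hinner, sub_pos.1 houter⟩

theorem gram_matrix_eigenvalues_general (ω : EReal) (w : ℝ → ℝ)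
    (hwc : ContinuousOn w {x : ℝ | -ω < (x : EReal) ∧ (x : EReal) < ω})
    (hwpos : ∀ x : ℝ, -ω < (x : EReal) → (x : EReal) < ω → 0 < w x)
    (N : ℕ) (p : Fin N → Polynomial ℝ)
    (horth : ∀ i j : Fin N,
      (∫ x in {x : ℝ | -ω < (x : EReal) ∧ (x : EReal) < ω},
        w x * (p i).eval x * (p j).eval x) = if i = j then 1 else 0)
    (s : ℝ) (hs0 : 0 < s) (hsω : (s : EReal) < ω)
    (M : Matrix (Fin N) (Fin N) ℝ)
    (hM : ∀ i j, M i j = ∫ x in Set.Ioo (-s) s, w x * (p i).eval x * (p j).eval x) :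
    M.IsSymm ∧
    (∀ v : Fin N → ℝ, v ≠ 0 →
      0 < dotProduct v (M.mulVec v) ∧
        dotProduct v (M.mulVec v) < dotProduct v v) ∧
    (∀ (c : ℝ) (v : Fin N → ℝ), v ≠ 0 → M.mulVec v = c • v → 0 < c ∧ c < 1) := by
  set S : Set ℝ := {x : ℝ | -ω < (x : EReal) ∧ (x : EReal) < ω}
  have hS : MeasurableSet S := measurableSet_Ioo.preimage continuous_coe_real_ereal.measurable
  obtain ⟨t, hst, htω⟩ := EReal.lt_iff_exists_real_btwn.1 hsω
  have hsubS : Ioo (-s) t ⊆ S := by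
    rw [← EReal.preimage_coe_Ioo]
    refine preimage_mono (Ioo_subset_Ioo ?_ htω.le)
    rw [EReal.coe_neg, EReal.neg_le_neg_iff]
    exact hsω.le
  obtain rfl : M = weightedGram (volume.restrict (Ioo (-s) s)) w (fun i => (p i).eval) :=
    Matrix.ext hM
  have hbounds := fun (v : Fin N → ℝ) (hv : v ≠ 0) =>
    dotProduct_weightedGram_mulVec_mem_Ioo (p := p) hS measurableSet_Ioo
      ((Ioo_subset_Ioo_right (EReal.coe_lt_coe_iff.1 hst).le).trans hsubS)
      (hwc.aestronglyMeasurable hS) (fun x hx => hwpos x hx.1 hx.2)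
      (Matrix.ext fun i j => by simp [weightedGram, horth, Matrix.one_apply])
      (neg_lt_self hs0) subset_rfl (EReal.coe_lt_coe_iff.1 hst)
      (fun x hx => ⟨hsubS ⟨by linarith [hx.1], hx.2⟩, fun h => hx.1.not_gt h.2⟩) hv
  exact ⟨weightedGram_isSymm, hbounds,
    fun c v hv => Matrix.eigenvalue_mem_Ioo_of_dotProduct_mulVec_mem_Ioo hbounds hv⟩

/-- Gaudin-type Lemma 6.3: for polynomials `p₁,…,p_N` orthonormal with
respect to a positive continuous weight `w` on `(-ω,ω)` and `0 < s < ω`, the Gram matrix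
`M_{ij} = ∫_{-s}^{s} w p_i p_j` is symmetric, satisfies `0 < vᵀMv < vᵀv` for every
nonzero `v`, and all of its eigenvalues lie in `(0,1)`. -/
theorem gram_matrix_eigenvalues (ω : EReal) (hω : (0 : EReal) < ω) (w : ℝ → ℝ)
    (hwc : ContinuousOn w {x : ℝ | -ω < (x : EReal) ∧ (x : EReal) < ω})
    (hwpos : ∀ x : ℝ, -ω < (x : EReal) → (x : EReal) < ω → 0 < w x)
    (N : ℕ) (hN : 1 ≤ N) (p : Fin N → Polynomial ℝ)
    (horth : ∀ i j : Fin N,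
      (∫ x in {x : ℝ | -ω < (x : EReal) ∧ (x : EReal) < ω},
        w x * (p i).eval x * (p j).eval x) = if i = j then 1 else 0)
    (s : ℝ) (hs0 : 0 < s) (hsω : (s : EReal) < ω)
    (M : Matrix (Fin N) (Fin N) ℝ)
    (hM : ∀ i j, M i j = ∫ x in Set.Ioo (-s) s, w x * (p i).eval x * (p j).eval x) :
    M.IsSymm ∧
    (∀ v : Fin N → ℝ, v ≠ 0 →
      0 < dotProduct v (M.mulVec v) ∧
        dotProduct v (M.mulVec v) < dotProduct v v) ∧
    (∀ (c : ℝ) (v : Fin N → ℝ), v ≠ 0 → M.mulVec v = c • v → 0 < c ∧ c < 1) :=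
  gram_matrix_eigenvalues_general ω w hwc hwpos N p horth s hs0 hsω M hM
end
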